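/- Let Π = (Π′, Π″) be a nontrivial partition and l ∈ ℤ, and suppose that S_{Π,l} ∩ Δ is nonempty. Then −r′·r″/2 < l·r − ρ_{Π′} < r′·r″/2, where ρ_{Π′} = Σ_{i∈Π′}((r+1)/2 − i). -/

import Mathlib

/-! Take `c ∈ S_{Π,l} ∩ Δ`. Because `∑ c = 0`, `l·r = ∑_{i∈Π′, j∈Π″} (c_i - c_j)`, and
`ρ_{Π′} = ∑_{i∈Π′, j∈Π″} ε_{ij}` with `ε_{ij} = sign (j - i) / 2`: the row sums of `ε` are the
coordinates of `ρ`, and `ε` is antisymmetric, so the pairs inside `Π′` cancel. As `c` is strictly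
decreasing with `c_1 - c_r < 1`, every `c_i - c_j` lies strictly between `0` and `2 ε_{ij}`,
i.e. within `1/2` of `ε_{ij}`. Summing over the `r′·r″` pairs gives the bound. -/

open scoped BigOperators

attribute [local instance] Classical.propDecidable

noncomputable section

namespace Verlinde


variable {r : ℕ}

/-- The root `α^{ij} = e_i - e_j`, viewed as the linear functional `x_i - x_j`. -/
def stdRoot (r : ℕ) (i j : Fin r) : Fin r → ℝ :=
  fun t => (if t = i then 1 else 0) - (if t = j then 1 else 0)

/-- `B ∈ 𝓑`: an ordered tuple of roots forming a linear basis of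
`V* = {a : ∑ i, a i = 0}`. -/
def IsOB (r : ℕ) (B : Fin (r - 1) → Fin r → ℝ) : Prop :=
  (∀ m, ∃ i j, i ≠ j ∧ B m = stdRoot r i j) ∧
    LinearIndependent ℝ B ∧
    ∀ a : Fin r → ℝ, (∑ i, a i) = 0 → a ∈ Submodule.span ℝ (Set.range B)

/-- Coordinates of `a` with respect to the tuple `B` (junk unless such
coordinates exist; they are unique when `B` is linearly independent). -/
def coordsOf (B : Fin (r - 1) → Fin r → ℝ) (a : Fin r → ℝ) : Fin (r - 1) → ℝ :=
  if h : ∃ c : Fin (r - 1) → ℝ, a = ∑ j, c j • B j then h.choose else 0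

/-- The integer part `[a]_B ∈ Λ`. -/
def intPart (B : Fin (r - 1) → Fin r → ℝ) (a : Fin r → ℝ) : Fin r → ℝ :=
  ∑ j, (⌊coordsOf B a j⌋ : ℝ) • B j

/-- The fractional part `{a}_B`. -/
def fracPart (B : Fin (r - 1) → Fin r → ℝ) (a : Fin r → ℝ) : Fin r → ℝ :=
  a - intPart B a

/-- `a ∈ V*` is regular if all its `B`-coordinates are non-integral, for every `B ∈ 𝓑`,
i.e. `{a}_B ∈ ∑_j (0,1)·β^{[j]}` for every `B ∈ 𝓑`. -/
def IsRegular (r : ℕ) (a : Fin r → ℝ) : Prop :=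
  ∀ B, IsOB r B → ∀ j, Int.fract (coordsOf B a j) ≠ 0

/-- The flag `Fl(B)`: `Fl(B) j = span (β^{[j]}, …, β^{[r-1]})`. -/
def flagOf (B : Fin (r - 1) → Fin r → ℝ) : Fin (r - 1) → Submodule ℝ (Fin r → ℝ) :=
  fun j => Submodule.span ℝ {x | ∃ i, j ≤ i ∧ B i = x}

/-- `B ⊣ C`. -/
def Dashv (B C : Fin (r - 1) → Fin r → ℝ) : Prop :=
  ∀ τ : Equiv.Perm (Fin (r - 1)), flagOf (B ∘ τ) ≠ flagOf C

/-- A diagonal basis: a subset of `𝓑` of cardinality `(r-1)!` any two distinct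
members of which satisfy `B ⊣ C`. -/
def IsDiagonalBasis (r : ℕ) (D : Finset (Fin (r - 1) → Fin r → ℝ)) : Prop :=
  D.card = (r - 1).factorial ∧ (∀ B ∈ D, IsOB r B) ∧
    ∀ B ∈ D, ∀ C ∈ D, B ≠ C → Dashv B C

/-- The index of the last coordinate (`r` in `1`-indexed notation). -/
def lastI (r : ℕ) (h : 0 < r) : Fin r := ⟨r - 1, by omega⟩

/-- `ρ = ((r-1)/2, (r-3)/2, …, (1-r)/2)`. -/
def rho (r : ℕ) : Fin r → ℝ := fun i => ((r : ℝ) - 1) / 2 - (i : ℝ)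

/-- `σ · a`, where `(σ·a)_i = a_{σ⁻¹ i}`. -/
def permVec (σ : Equiv.Perm (Fin r)) (a : Fin r → ℝ) : Fin r → ℝ := fun i => a (σ⁻¹ i)

/-- A nontrivial (ordered) partition `Π = (Π′, Π″)`, encoded by `Π′ = P`:
both parts nonempty and `r ∈ Π″`. -/
def NontrivPart (r : ℕ) (h : 0 < r) (P : Finset (Fin r)) : Prop :=
  P.Nonempty ∧ lastI r h ∉ P

/-- The wall `S_{Π,l} ⊆ V*`. -/
def wallSet (r : ℕ) (P : Finset (Fin r)) (l : ℤ) : Set (Fin r → ℝ) :=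
  {c | (∑ i, c i) = 0 ∧ (∑ i ∈ P, c i) = (l : ℝ)}

/-- The simplex `Δ` of admissible parabolic weights. -/
def DeltaSet (r : ℕ) (h : 0 < r) : Set (Fin r → ℝ) :=
  {c | (∑ i, c i) = 0 ∧ (∀ i j : Fin r, i < j → c j < c i) ∧
    c ⟨0, h⟩ - c (lastI r h) < 1}

/-- The chamber of a (regular) point `c ∈ V*`. -/
def chamberOf (r : ℕ) (c : Fin r → ℝ) : Set (Fin r → ℝ) :=
  {b | (∑ i, b i) = 0 ∧ IsRegular r b ∧ ∀ B, IsOB r B → intPart B b = intPart B c}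

/-- `{i,j}` is an edge of `Tree(B)`. -/
def IsTreeEdge (B : Fin (r - 1) → Fin r → ℝ) (i j : Fin r) : Prop :=
  ∃ m, B m = stdRoot r i j ∨ B m = stdRoot r j i

/-- `B` splits along the partition `Π` (with `Π′ = P`): exactly one edge of
`Tree(B)` joins `Π′` and `Π″`. -/
def SplitsAlong (B : Fin (r - 1) → Fin r → ℝ) (P : Finset (Fin r)) : Prop :=
  ∃! pr : Fin r × Fin r, pr.1 ∈ P ∧ pr.2 ∉ P ∧ IsTreeEdge B pr.1 pr.2

/-- The linking root `β_link = α^{pq}` with `p ∈ Π′`, `q ∈ Π″`. -/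
def betaLink (B : Fin (r - 1) → Fin r → ℝ) (P : Finset (Fin r)) : Fin r → ℝ :=
  if h : ∃ pr : Fin r × Fin r, pr.1 ∈ P ∧ pr.2 ∉ P ∧ IsTreeEdge B pr.1 pr.2 then
    stdRoot r h.choose.1 h.choose.2
  else 0

end Verlinde

namespace Finset

theorem sum_sum_eq_zero_of_antisymm {ι : Type*} {f : ι → ι → ℝ}
    (hf : ∀ i j, f j i = -f i j) (s : Finset ι) : ∑ i ∈ s, ∑ j ∈ s, f i j = 0 := by
  have h : ∑ i ∈ s, ∑ j ∈ s, f i j = ∑ i ∈ s, ∑ j ∈ s, -f i j := by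
    rw [sum_comm]
    exact sum_congr rfl fun i _ => sum_congr rfl fun j _ => hf i j
  simp only [sum_neg_distrib] at h
  linarith

theorem sum_sum_sub {ι R : Type*} [CommRing R] (c : ι → R) (s t : Finset ι) :
    ∑ i ∈ s, ∑ j ∈ t, (c i - c j) = t.card * ∑ i ∈ s, c i - s.card * ∑ j ∈ t, c j := by
  simp only [sum_sub_distrib, sum_const, nsmul_eq_mul, mul_sum]

theorem sum_sum_compl_sub_of_sum_eq_zero {ι : Type*} [Fintype ι] [DecidableEq ι]
    {c : ι → ℝ} (hc : ∑ i, c i = 0) (s : Finset ι) :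
    ∑ i ∈ s, ∑ j ∈ sᶜ, (c i - c j) = Fintype.card ι * ∑ i ∈ s, c i := by
  have hcompl : ∑ j ∈ sᶜ, c j = -∑ i ∈ s, c i := by
    linarith [sum_add_sum_compl s c]
  have hcard : (s.card : ℝ) + sᶜ.card = Fintype.card ι := by
    exact_mod_cast card_add_card_compl s
  rw [sum_sum_sub, hcompl, ← hcard]
  ring

theorem abs_sum_lt_card_mul {ι : Type*} {s : Finset ι} (hs : s.Nonempty)
    {f : ι → ℝ} {b : ℝ} (hf : ∀ i ∈ s, |f i| < b) : |∑ i ∈ s, f i| < s.card * b :=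
  calc |∑ i ∈ s, f i| ≤ ∑ i ∈ s, |f i| := abs_sum_le_sum_abs _ _
    _ < ∑ _i ∈ s, b := sum_lt_sum_of_nonempty hs hf
    _ = s.card * b := by rw [sum_const, nsmul_eq_mul]

end Finset

section HalfSign

variable {ι : Type*} [LinearOrder ι]

/-- The `ε_{ij} = sign (j - i) / 2` above, written without subtraction so that it makes sense in
any linear order. -/
def halfSign (i j : ι) : ℝ :=
  (if i < j then 1 / 2 else 0) - (if j < i then 1 / 2 else 0)

theorem halfSign_swap (i j : ι) : halfSign j i = -halfSign i j := by
  unfold halfSign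
  ring

theorem halfSign_of_lt {i j : ι} (h : i < j) : halfSign i j = 1 / 2 := by
  simp [halfSign, h, h.not_gt]

theorem sum_sum_compl_halfSign [Fintype ι] [DecidableEq ι] (s : Finset ι) :
    ∑ i ∈ s, ∑ j ∈ sᶜ, halfSign i j = ∑ i ∈ s, ∑ j, halfSign i j := by
  have hsplit : ∀ i, ∑ j, halfSign i j = ∑ j ∈ s, halfSign i j + ∑ j ∈ sᶜ, halfSign i j :=
    fun i => (Finset.sum_add_sum_compl s _).symm
  simp only [hsplit, Finset.sum_add_distrib,
    Finset.sum_sum_eq_zero_of_antisymm halfSign_swap s, zero_add]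

theorem sum_halfSign [Fintype ι] [LocallyFiniteOrderTop ι] [LocallyFiniteOrderBot ι] (i : ι) :
    ∑ j, halfSign i j = ((Finset.Ioi i).card - (Finset.Iio i).card : ℝ) / 2 := by
  simp only [halfSign, Finset.sum_sub_distrib, Finset.sum_ite, Finset.sum_const,
    Finset.filter_lt_eq_Ioi, Finset.filter_gt_eq_Iio, nsmul_eq_mul]
  ring

theorem abs_sub_sub_halfSign_lt {c : ι → ℝ} (hc : StrictAnti c)
    (hspread : ∀ i j, c i - c j < 1) {i j : ι} (hij : i ≠ j) :
    |c i - c j - halfSign i j| < 1 / 2 := by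
  rw [abs_lt]
  rcases hij.lt_or_gt with h | h
  · rw [halfSign_of_lt h]
    have := hc h
    have := hspread i j
    constructor <;> linarith
  · rw [halfSign_swap, halfSign_of_lt h]
    have := hc h
    have := hspread j i
    constructor <;> linarith

end HalfSign

namespace Verlinde

theorem sum_halfSign_eq_rho {r : ℕ} (i : Fin r) : ∑ j, halfSign i j = rho r i := by
  rw [sum_halfSign, Fin.card_Ioi, Fin.card_Iio, rho, Nat.sub_sub,
    Nat.cast_sub (by omega : 1 + (i : ℕ) ≤ r)]
  push_cast
  ring

theorem strictAnti_of_mem_DeltaSet {r : ℕ} {h : 0 < r} {c : Fin r → ℝ} (hc : c ∈ DeltaSet r h) :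
    StrictAnti c :=
  fun i j hij => hc.2.1 i j hij

theorem sub_lt_one_of_mem_DeltaSet {r : ℕ} {h : 0 < r} {c : Fin r → ℝ} (hc : c ∈ DeltaSet r h)
    (i j : Fin r) : c i - c j < 1 := by
  have hfirst : c i ≤ c ⟨0, h⟩ :=
    (strictAnti_of_mem_DeltaSet hc).antitone (Fin.le_def.mpr (Nat.zero_le _))
  have hlast : c (lastI r h) ≤ c j :=
    (strictAnti_of_mem_DeltaSet hc).antitone (Fin.le_def.mpr (by simp [lastI]; omega))
  linarith [hc.2.2]

/-- (Lemma `myfavouritelemma2`.)  If the wall `S_{Π,l}`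
meets `Δ` then `−r′·r″/2 < l·r − ρ_{Π′} < r′·r″/2`  (indices `0`-based, so
`ρ_{Π′} = ∑_{i∈Π′} ((r+1)/2 − (i+1))`). -/
theorem wall_meets_Delta_inequality
    (r : ℕ) (hr : 2 ≤ r)
    (P : Finset (Fin r)) (hP : NontrivPart r (by omega) P) (l : ℤ)
    (hmeet : ∃ c, c ∈ wallSet r P l ∧ c ∈ DeltaSet r (by omega)) :
    -(((P.card : ℝ) * (Pᶜ.card : ℝ)) / 2) <
        (l : ℝ) * r - ∑ i ∈ P, (((r : ℝ) + 1) / 2 - ((i : ℕ) + 1)) ∧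
      (l : ℝ) * r - (∑ i ∈ P, (((r : ℝ) + 1) / 2 - ((i : ℕ) + 1))) <
        ((P.card : ℝ) * (Pᶜ.card : ℝ)) / 2 := by
  obtain ⟨c, ⟨hsum, hwall⟩, hΔ⟩ := hmeet
  have hrho : ∀ i : Fin r, ((r : ℝ) + 1) / 2 - ((i : ℕ) + 1) = ∑ j, halfSign i j := by
    intro i
    rw [sum_halfSign_eq_rho, rho]
    ring
  have hdecomp : (l : ℝ) * r - ∑ i ∈ P, (((r : ℝ) + 1) / 2 - ((i : ℕ) + 1)) =
      ∑ p ∈ P ×ˢ Pᶜ, (c p.1 - c p.2 - halfSign p.1 p.2) := by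
    simp only [hrho, Finset.sum_product]
    rw [Finset.sum_congr rfl fun i _ => Finset.sum_sub_distrib (fun j => c i - c j) _,
      Finset.sum_sub_distrib, Finset.sum_sum_compl_sub_of_sum_eq_zero hsum, hwall,
      Fintype.card_fin, sum_sum_compl_halfSign, mul_comm]
  have hne : (P ×ˢ Pᶜ).Nonempty := hP.1.product ⟨lastI r _, Finset.mem_compl.mpr hP.2⟩
  have hbound : |∑ p ∈ P ×ˢ Pᶜ, (c p.1 - c p.2 - halfSign p.1 p.2)| <
      (P ×ˢ Pᶜ).card * (1 / 2) := by
    refine Finset.abs_sum_lt_card_mul hne fun p hp => ?_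
    obtain ⟨hp₁, hp₂⟩ := Finset.mem_product.mp hp
    exact abs_sub_sub_halfSign_lt (strictAnti_of_mem_DeltaSet hΔ)
      (sub_lt_one_of_mem_DeltaSet hΔ) (ne_of_mem_of_not_mem hp₁ (Finset.mem_compl.mp hp₂))
  rw [← hdecomp, Finset.card_product, Nat.cast_mul, abs_lt] at hbound
  constructor <;> linarith [hbound.1, hbound.2]

end Verlinde
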